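/- arXiv:2404.01806 — 6 statements merged into one kernel-verified Lean document; each statement's English description precedes it below -/
import Mathlib

section
/- Let M := {(2k)² : k ∈ ℕ₀} ∪ {−(2k)² : k ∈ ℕ}. Then M is not an approximate subgroup of ℤ, but Λ := (2ℤ+1) ∪ M is an approximate subgroup of ℤ. Consequently, the intersection of the two approximate subgroups Λ and 2ℤ of ℤ, which equals M, is not an approximate subgroup. -/
/-!
Every element of `M + M` would have to lie within bounded distance of `M`. But `M + M` contains
the gaps `(2m + 2)² - (2m)² = 8m + 4` between consecutive even squares, and for `m = j (j + 1) / 2`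
this is `4j² + 4j + 4`, which lies at distance at least `4j` from every even square. The set `Λ`,
on the other hand, contains all odd numbers, so `Λ + {0, 1}` is already all of `ℤ`.
-/

open Pointwise

/-- An approximate subgroup of `(ℤ,+)`. -/
def IsApproxAddSubgroup (A : Set ℤ) : Prop :=
  -A = A ∧ (0 : ℤ) ∈ A ∧ ∃ F : Set ℤ, F.Finite ∧ A + A ⊆ A + F

/-- `M = {(2k)² : k ∈ ℕ₀} ∪ {-(2k)² : k ∈ ℕ}`. -/
def Mset : Set ℤ :=
  {x : ℤ | ∃ k : ℕ, x = (2 * (k : ℤ)) ^ 2} ∪ {x : ℤ | ∃ k : ℕ, 1 ≤ k ∧ x = -((2 * (k : ℤ)) ^ 2)}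

/-- `Λ = (2ℤ+1) ∪ M`. -/
def LamSet : Set ℤ := {x : ℤ | Odd x} ∪ Mset

lemma Set.Finite.exists_abs_sub_le_of_mem_add {A F : Set ℤ} (hF : F.Finite) :
    ∃ C : ℤ, ∀ x ∈ A + F, ∃ a ∈ A, |x - a| ≤ C := by
  obtain ⟨C, hC⟩ := (hF.image abs).bddAbove
  refine ⟨C, ?_⟩
  rintro _ ⟨a, ha, f, hf, rfl⟩
  exact ⟨a, ha, by simpa using hC (Set.mem_image_of_mem abs hf)⟩

lemma IsApproxAddSubgroup.of_odd_subset {A : Set ℤ} (hneg : -A = A) (h0 : (0 : ℤ) ∈ A)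
    (hodd : {x : ℤ | Odd x} ⊆ A) : IsApproxAddSubgroup A := by
  refine ⟨hneg, h0, {0, 1}, by simp, fun x _ => ?_⟩
  rcases Int.even_or_odd x with ⟨k, rfl⟩ | hx
  · exact ⟨k + k - 1, hodd ⟨k - 1, by ring⟩, 1, by simp, by ring⟩
  · exact ⟨x, hodd hx, 0, by simp, by ring⟩

lemma isApproxAddSubgroup_addSubgroup (H : AddSubgroup ℤ) : IsApproxAddSubgroup H := by
  refine ⟨by simp, H.zero_mem, {0}, Set.finite_singleton 0, ?_⟩
  rintro _ ⟨a, ha, b, hb, rfl⟩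
  exact ⟨a + b, H.add_mem ha hb, 0, rfl, add_zero _⟩

lemma neg_Mset : -Mset = Mset := by
  suffices h : ∀ x ∈ Mset, -x ∈ Mset from
    Set.Subset.antisymm (fun x hx => neg_neg x ▸ h _ hx) h
  rintro x (⟨k, rfl⟩ | ⟨k, hk, rfl⟩)
  · rcases Nat.eq_zero_or_pos k with rfl | hk
    · exact Or.inl ⟨0, by simp⟩
    · exact Or.inr ⟨k, hk, rfl⟩
  · exact Or.inl ⟨k, neg_neg _⟩

lemma Mset_subset_even : Mset ⊆ {x : ℤ | Even x} := by
  rintro x (⟨k, rfl⟩ | ⟨k, -, rfl⟩)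
  · exact ⟨2 * k ^ 2, by ring⟩
  · exact ⟨-(2 * k ^ 2), by ring⟩

lemma sub_sq_mem_Mset_add_Mset {m : ℕ} (hm : 1 ≤ m) :
    (2 * ((m + 1 : ℕ) : ℤ)) ^ 2 - (2 * (m : ℤ)) ^ 2 ∈ Mset + Mset :=
  ⟨_, Or.inl ⟨m + 1, rfl⟩, _, Or.inr ⟨m, hm, rfl⟩, (sub_eq_add_neg _ _).symm⟩

lemma le_abs_sub_of_mem_Mset (j : ℤ) (hj : 0 ≤ j) {a : ℤ} (ha : a ∈ Mset) :
    4 * j ≤ |4 * j ^ 2 + 4 * j + 4 - a| := by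
  rcases ha with ⟨i, rfl⟩ | ⟨i, -, rfl⟩
  · have hi : (0 : ℤ) ≤ i := i.cast_nonneg
    rcases le_or_gt (i : ℤ) j with h | h
    · have : (i : ℤ) ^ 2 ≤ j ^ 2 := pow_le_pow_left₀ hi h 2
      rw [abs_of_nonneg (by nlinarith)]
      nlinarith
    · have : (j + 1) ^ 2 ≤ (i : ℤ) ^ 2 := pow_le_pow_left₀ (by linarith) h 2
      rw [abs_of_nonpos (by nlinarith)]
      nlinarith
  · rw [abs_of_nonneg (by nlinarith [sq_nonneg (i : ℤ)])]
    nlinarith [sq_nonneg (i : ℤ)]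

lemma exists_mem_Mset_add_Mset_far (C : ℤ) :
    ∃ x ∈ Mset + Mset, ∀ a ∈ Mset, C < |x - a| := by
  -- `j = 2t` makes `m = j (j + 1) / 2 = t (2t + 1)` a natural number.
  set t : ℕ := C.toNat + 1
  have ht : C < 4 * (2 * t : ℤ) := by have := C.self_le_toNat; omega
  have hgap : (2 * ((t * (2 * t + 1) + 1 : ℕ) : ℤ)) ^ 2 - (2 * ((t * (2 * t + 1) : ℕ) : ℤ)) ^ 2 =
      4 * (2 * t : ℤ) ^ 2 + 4 * (2 * t) + 4 := by
    push_cast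
    ring
  refine ⟨_, hgap ▸ sub_sq_mem_Mset_add_Mset (Nat.mul_pos (by omega) (by omega)), fun a ha => ?_⟩
  exact ht.trans_le (le_abs_sub_of_mem_Mset _ (by positivity) ha)

lemma not_isApproxAddSubgroup_Mset : ¬ IsApproxAddSubgroup Mset := by
  rintro ⟨-, -, F, hF, hsub⟩
  obtain ⟨C, hC⟩ := hF.exists_abs_sub_le_of_mem_add (A := Mset)
  obtain ⟨x, hx, hfar⟩ := exists_mem_Mset_add_Mset_far C
  obtain ⟨a, ha, hxa⟩ := hC x (hsub hx)
  exact (hfar a ha).not_ge hxa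

lemma isApproxAddSubgroup_LamSet : IsApproxAddSubgroup LamSet := by
  refine .of_odd_subset ?_ (Or.inr (Or.inl ⟨0, by simp⟩)) Set.subset_union_left
  rw [LamSet, Set.union_neg, neg_Mset]
  ext x
  simp

lemma LamSet_inter_even : LamSet ∩ {x : ℤ | Even x} = Mset := by
  rw [LamSet, Set.union_inter_distrib_right, Set.inter_eq_left.mpr Mset_subset_even]
  convert Set.empty_union Mset
  ext x
  simp

/-- `M` is not an approximate subgroup of `ℤ`, `Λ = (2ℤ+1) ∪ M` is one, and the intersection
of the approximate subgroups `Λ` and `2ℤ` equals `M`, hence is not an approximate subgroup. -/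
theorem intersection_not_approx :
    ¬ IsApproxAddSubgroup Mset ∧
    IsApproxAddSubgroup LamSet ∧
    IsApproxAddSubgroup {x : ℤ | Even x} ∧
    LamSet ∩ {x : ℤ | Even x} = Mset :=
  ⟨not_isApproxAddSubgroup_Mset, isApproxAddSubgroup_LamSet,
    isApproxAddSubgroup_addSubgroup (AddSubgroup.even ℤ), LamSet_inter_even⟩
end

section
/- If Λ and Ξ are approximate subgroups of a group Γ and k, l ≥ 2, then Λᵏ ∩ Ξˡ is an approximate subgroup of Γ. -/
open Pointwise

/-- An approximate subgroup of a group: a symmetric unital subset `A` with `A² ⊆ A·F`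
for some finite `F`. -/
def IsApproxSubgroup {G : Type*} [Group G] (A : Set G) : Prop :=
  A⁻¹ = A ∧ (1 : G) ∈ A ∧ ∃ F : Set G, F.Finite ∧ A * A ⊆ A * F

/-! `IsApproxSubgroup A` covers `A²` by finitely many right translates of `A`, Mathlib's
`IsApproximateSubgroup K A` by at most `K` left translates; for symmetric `A` inversion swaps the
two, so the theorem is `IsApproximateSubgroup.pow_inter_pow`. -/

section

variable {G : Type*} [Group G]

theorem Set.mul_self_subset_mul_iff_of_inv_eq_self {A F : Set G} (hA : A⁻¹ = A) :
    A * A ⊆ A * F ↔ A * A ⊆ F⁻¹ * A := by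
  rw [← Set.inv_subset_inv, mul_inv_rev, mul_inv_rev, hA]

theorem isApproxSubgroup_iff_exists_isApproximateSubgroup {A : Set G} :
    IsApproxSubgroup A ↔ ∃ K : ℝ, IsApproximateSubgroup K A := by
  constructor
  · rintro ⟨hA, hA₁, F, hF, hAF⟩
    rw [Set.mul_self_subset_mul_iff_of_inv_eq_self hA] at hAF
    refine ⟨_, hA₁, hA, hF.inv.toFinset, le_rfl, ?_⟩
    simpa [sq] using hAF
  · rintro ⟨K, hA₁, hA, F, -, hAF⟩
    refine ⟨hA, hA₁, (F : Set G)⁻¹, F.finite_toSet.inv, ?_⟩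
    rw [Set.mul_self_subset_mul_iff_of_inv_eq_self hA, inv_inv]
    simpa [sq] using hAF

end

/-- If `L` and `X` are approximate subgroups of `G` and `k, l ≥ 2`, then `Lᵏ ∩ Xˡ` is an
approximate subgroup of `G`. -/
theorem inter_pow_approx {G : Type*} [Group G] (L X : Set G)
    (hL : IsApproxSubgroup L) (hX : IsApproxSubgroup X)
    (k l : ℕ) (hk : 2 ≤ k) (hl : 2 ≤ l) :
    IsApproxSubgroup (L ^ k ∩ X ^ l) := by
  obtain ⟨K, hL⟩ := isApproxSubgroup_iff_exists_isApproximateSubgroup.1 hL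
  obtain ⟨K', hX⟩ := isApproxSubgroup_iff_exists_isApproximateSubgroup.1 hX
  exact isApproxSubgroup_iff_exists_isApproximateSubgroup.2 ⟨_, hL.pow_inter_pow hX hk hl⟩
end

section
/- If ρ: (Ξ, Ξ^∞) → (Λ, Λ^∞) is a global morphism of approximate groups (a group homomorphism ρ: Ξ^∞ → Λ^∞ with ρ(Ξ) ⊆ Λ), then for every k ≥ 2 the partial kernel ker_k(ρ) := ker(ρ) ∩ Ξᵏ is an approximate subgroup of Ξ^∞. -/
open Pointwise

private lemma pow_sub_aux {G : Type*} [Group G] {X F : Set G} (hXF : X * X ⊆ X * F) :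
    ∀ n, X ^ (n + 1) ⊆ X * F ^ n := by
  intro n
  induction n with
  | zero => simp
  | succ n ih =>
    calc X ^ (n + 2) = X * X ^ (n + 1) := by rw [← pow_succ']
    _ ⊆ X * (X * F ^ n) := Set.mul_subset_mul_left ih
    _ = (X * X) * F ^ n := by rw [mul_assoc]
    _ ⊆ (X * F) * F ^ n := Set.mul_subset_mul_right hXF
    _ = X * F ^ (n + 1) := by rw [mul_assoc, ← pow_succ']

private lemma fin_pow {G : Type*} [Group G] {F : Set G} (hF : F.Finite) (n : ℕ) :
    (F ^ n).Finite := by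
  induction n with
  | zero => simp
  | succ n ih => rw [pow_succ]; exact ih.mul hF

/-- If `ρ : (Ξ, Ξ^∞) → (Λ, Λ^∞)` is a global morphism of approximate groups (here the
enveloping groups are modelled by the ambient groups, generated by `Ξ` resp. `Λ`), then for
every `k ≥ 2` the partial kernel `ker ρ ∩ Ξᵏ` is an approximate subgroup of `Ξ^∞`. -/
theorem partial_kernel_approx {G H : Type*} [Group G] [Group H]
    (X : Set G) (L : Set H)
    (hX : IsApproxSubgroup X) (hL : IsApproxSubgroup L)
    (hXgen : Subgroup.closure X = ⊤) (hLgen : Subgroup.closure L = ⊤)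
    (ρ : G →* H) (hρ : ρ '' X ⊆ L)
    (k : ℕ) (hk : 2 ≤ k) :
    IsApproxSubgroup ({g : G | ρ g = 1} ∩ X ^ k) := by
  obtain ⟨hXinv, hX1, F, hFfin, hXF⟩ := hX
  set A : Set G := {g : G | ρ g = 1} ∩ X ^ k with hA
  refine ⟨?_, ⟨by simp, Set.one_mem_pow hX1⟩, ?_⟩
  · have hXk : (X ^ k)⁻¹ = X ^ k := by rw [← inv_pow, hXinv]
    have hker : ({g : G | ρ g = 1})⁻¹ = {g : G | ρ g = 1} := by
      ext g; simp [Set.mem_inv]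
    rw [hA, Set.inter_inv, hXk, hker]
  · -- the finite set
    set m := 2 * k - 1 with hm
    have hm1 : m + 1 = 2 * k := by omega
    -- choice of representatives
    classical
    set good : G → Prop := fun t => ∃ g, g ∈ {g : G | ρ g = 1} ∩ X ^ (2 * k) ∧ ∃ x ∈ X, g = x * t
      with hgood
    set rep : G → G := fun t => if h : good t then h.choose else 1 with hrep
    refine ⟨rep '' (F ^ m), (hFfin |> fun h => fin_pow h m).image rep, ?_⟩
    rintro g ⟨a, ha, b, hb, rfl⟩
    have hker : ρ (a * b) = 1 := by
      have := ha.1; have := hb.1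
      simp_all
    have hmem : a * b ∈ X ^ (2 * k) := by
      have : a * b ∈ X ^ k * X ^ k := Set.mul_mem_mul ha.2 hb.2
      rwa [← pow_add, ← two_mul] at this
    have hsub : a * b ∈ X * F ^ m := pow_sub_aux hXF m (by rwa [hm1])
    obtain ⟨x, hx, t, ht, hxt⟩ := hsub
    have hgt : good t := ⟨a * b, ⟨hker, hmem⟩, x, hx, hxt.symm⟩
    have hrept : rep t = hgt.choose := by simp [hrep, hgt]
    obtain ⟨⟨hgker, -⟩, y, hy, hgy⟩ := hgt.choose_spec
    refine ⟨(a * b) * (rep t)⁻¹, ⟨?_, ?_⟩, rep t, ⟨t, ht, rfl⟩, by group⟩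
    · have h1 : ρ (rep t) = 1 := by rw [hrept]; exact hgker
      show ρ ((a * b) * (rep t)⁻¹) = 1
      rw [map_mul, map_inv, hker, h1]; simp
    · have : (a * b) * (rep t)⁻¹ = x * y⁻¹ := by
        rw [hrept, hgy, ← hxt]; group
      rw [this]
      have hy' : y⁻¹ ∈ X := by rw [← hXinv]; exact Set.inv_mem_inv.2 hy
      have hxy : x * y⁻¹ ∈ X ^ 2 := by rw [pow_two]; exact Set.mul_mem_mul hx hy'
      exact Set.pow_subset_pow_right hX1 hk hxy
end

section
/- Let (Ξ, Ξ^∞) and (Λ, Λ^∞) be countable approximate groups with left-invariant proper metrics d on Ξ^∞ and d' on Λ^∞, and let f₂: Ξ² → Λ² be a 2-local morphism (a partial homomorphism with f₂(Ξ) ⊆ Λ). Then the restriction f₁: (Ξ, d) → (Λ, d') is coarsely Lipschitz. -/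
/-!
Writing `y = x * (x⁻¹ * y)` with all three factors in `Ξ²`, the partial homomorphism gives
`f y = f x * f (x⁻¹ * y)`, so by left invariance `d' (f x) (f y) = d' 1 (f (x⁻¹ * y))`.
If `d x y ≤ r` then `x⁻¹ * y` lies in the `r`-ball about `1`, which is finite because `d` is
proper; hence `d' (f x) (f y)` is bounded by the maximum of `d' 1 ∘ f` over that ball.
-/

open Pointwise

namespace IsApproxSubgroup

variable {G : Type*} [Group G] {A : Set G}

lemma subset_mul_self (hA : IsApproxSubgroup A) : A ⊆ A * A :=
  Set.subset_mul_left A hA.2.1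

lemma inv_mul_mem_mul (hA : IsApproxSubgroup A) {x y : G} (hx : x ∈ A) (hy : y ∈ A) :
    x⁻¹ * y ∈ A * A :=
  Set.mul_mem_mul (by rw [← hA.1]; exact Set.inv_mem_inv.mpr hx) hy

lemma map_eq_map_mul_map_inv_mul {H : Type*} [Mul H] (hA : IsApproxSubgroup A) {f : G → H}
    (hhom : ∀ a ∈ A * A, ∀ b ∈ A * A, a * b ∈ A * A → f (a * b) = f a * f b)
    {x y : G} (hx : x ∈ A) (hy : y ∈ A) : f y = f x * f (x⁻¹ * y) := by
  have hxy : x * (x⁻¹ * y) = y := mul_inv_cancel_left x y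
  have hyy : x * (x⁻¹ * y) ∈ A * A := by rw [hxy]; exact hA.subset_mul_self hy
  rw [← hhom x (hA.subset_mul_self hx) _ (hA.inv_mul_mem_mul hx hy) hyy, hxy]

end IsApproxSubgroup

lemma eq_apply_one_inv_mul_of_left_invariant {G : Type*} [Group G] {d : G → G → ℝ}
    (hinv : ∀ g x y, d (g * x) (g * y) = d x y) (x y : G) : d x y = d 1 (x⁻¹ * y) := by
  rw [← hinv x⁻¹ x y, inv_mul_cancel]

theorem local_morphism_coarsely_lipschitz_general {G H : Type*} [Group G] [Group H]
    (X : Set G) (hX : IsApproxSubgroup X)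
    (d : G → G → ℝ)
    (hdinv : ∀ g x y, d (g * x) (g * y) = d x y)
    (hdproper : ∀ r : ℝ, {g : G | d 1 g ≤ r}.Finite)
    (d' : H → H → ℝ)
    (hd'inv : ∀ g x y, d' (g * x) (g * y) = d' x y)
    (f : G → H)
    (hhom : ∀ a ∈ X * X, ∀ b ∈ X * X, a * b ∈ X * X → f (a * b) = f a * f b) :
    ∀ r : ℝ, 0 ≤ r → ∃ s : ℝ, ∀ x ∈ X, ∀ y ∈ X, d x y ≤ r → d' (f x) (f y) ≤ s := by
  intro r _
  obtain ⟨s, hs⟩ := ((hdproper r).image fun g => d' 1 (f g)).bddAbove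
  refine ⟨s, fun x hx y hy hxy => ?_⟩
  have hball : d 1 (x⁻¹ * y) ≤ r := eq_apply_one_inv_mul_of_left_invariant hdinv x y ▸ hxy
  calc d' (f x) (f y) = d' (f x * 1) (f x * f (x⁻¹ * y)) := by
        rw [mul_one, ← hX.map_eq_map_mul_map_inv_mul hhom hx hy]
    _ = d' 1 (f (x⁻¹ * y)) := hd'inv _ _ _
    _ ≤ s := hs ⟨_, hball, rfl⟩

/-- If `f₂ : Ξ² → Λ²` is a 2-local morphism of countable approximate groups, then its
restriction `f₁ : Ξ → Λ` is coarsely Lipschitz with respect to left-invariant proper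
metrics on the enveloping groups. -/
theorem local_morphism_coarsely_lipschitz {G H : Type*} [Group G] [Group H]
    [Countable G] [Countable H]
    (X : Set G) (L : Set H) (hX : IsApproxSubgroup X) (hL : IsApproxSubgroup L)
    (d : G → G → ℝ)
    (hdeq : ∀ x y, d x y = 0 ↔ x = y) (hdsymm : ∀ x y, d x y = d y x)
    (hdtri : ∀ x y z, d x z ≤ d x y + d y z)
    (hdinv : ∀ g x y, d (g * x) (g * y) = d x y)
    (hdproper : ∀ r : ℝ, {g : G | d 1 g ≤ r}.Finite)
    (d' : H → H → ℝ)
    (hd'eq : ∀ x y, d' x y = 0 ↔ x = y) (hd'symm : ∀ x y, d' x y = d' y x)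
    (hd'tri : ∀ x y z, d' x z ≤ d' x y + d' y z)
    (hd'inv : ∀ g x y, d' (g * x) (g * y) = d' x y)
    (hd'proper : ∀ r : ℝ, {h : H | d' 1 h ≤ r}.Finite)
    (f : G → H)
    (hf2 : ∀ x ∈ X * X, f x ∈ L * L)
    (hf1 : ∀ x ∈ X, f x ∈ L)
    (hhom : ∀ a ∈ X * X, ∀ b ∈ X * X, a * b ∈ X * X → f (a * b) = f a * f b) :
    ∀ r : ℝ, 0 ≤ r → ∃ s : ℝ, ∀ x ∈ X, ∀ y ∈ X, d x y ≤ r → d' (f x) (f y) ≤ s :=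
  local_morphism_coarsely_lipschitz_general X hX d hdinv hdproper d' hd'inv f hhom
end

section
/- Let (Ξ, Ξ^∞) be a countable approximate group, (Λ, Λ^∞) an approximate group, and ρ_{k+1}: Ξ^{k+1} → Λ^{k+1} a (k+1)-local morphism with ρ(Ξ) = Λ, for some k ≥ 2. Fix a left-invariant proper metric d on Ξ^∞. Then there exists R > 0 such that for all j = 2, …, k: ker₂(ρ_{k+1}) ⊆ ker_j(ρ_{k+1}) ⊆ N_R(ker₂(ρ_{k+1})), where ker_j(ρ_{k+1}) := ρ_{k+1}⁻¹(e) ∩ Ξʲ. -/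
/-!
Since `X * X ⊆ X * F` with `F` finite, every element of `Xʲ` (`j ≤ k`) can be written `y * f`
with `y ∈ X` and `f` in a fixed finite set. If `y * f` lies in the kernel, the local
morphism gives `ρ f = ρ y⁻¹ ∈ ρ(X)`, so `f` may be replaced by some `c f ∈ X` with the same image
chosen once and for all; then `y * c f ∈ ker₂(ρ)`, and by left invariance its distance to
`y * f` is `d (c f) f`, which takes only finitely many values.
-/

open Pointwise

open Set

theorem Set.Finite.pow {M : Type*} [Monoid M] {s : Set M} (hs : s.Finite) (n : ℕ) :
    (s ^ n).Finite := by
  induction n with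
  | zero => simp
  | succ n ih => rw [pow_succ]; exact ih.mul hs

theorem pow_succ_subset_mul_pow {M : Type*} [Monoid M] {A F : Set M} (h : A * A ⊆ A * F)
    (n : ℕ) : A ^ (n + 1) ⊆ A * F ^ n := by
  induction n with
  | zero => simp
  | succ n ih =>
    calc A ^ (n + 1 + 1) = A * A ^ (n + 1) := pow_succ' A (n + 1)
      _ ⊆ A * (A * F ^ n) := mul_subset_mul_left ih
      _ = A * A * F ^ n := (mul_assoc _ _ _).symm
      _ ⊆ A * F * F ^ n := mul_subset_mul_right h
      _ = A * F ^ (n + 1) := by rw [mul_assoc, ← pow_succ']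

theorem IsApproxSubgroup.exists_finite_pow_subset_mul {G : Type*} [Group G] {X : Set G}
    (hX : IsApproxSubgroup X) (m : ℕ) :
    ∃ F : Set G, F.Finite ∧ ∀ n ≤ m, X ^ (n + 1) ⊆ X * F := by
  obtain ⟨-, -, F, hF, hXX⟩ := hX
  refine ⟨insert 1 F ^ m, (hF.insert 1).pow m, fun n hn => ?_⟩
  calc X ^ (n + 1) ⊆ X * insert 1 F ^ n :=
        pow_succ_subset_mul_pow (hXX.trans (mul_subset_mul_left (subset_insert 1 F))) n
    _ ⊆ X * insert 1 F ^ m := mul_subset_mul_left (pow_subset_pow_right (mem_insert 1 F) hn)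

/-- A `(k+1)`-local morphism on `X` is a map `ρ` with `IsPartialHom ρ (X ^ (k + 1))`. -/
def IsPartialHom {G H : Type*} [Mul G] [Mul H] (ρ : G → H) (P : Set G) : Prop :=
  ∀ a ∈ P, ∀ b ∈ P, a * b ∈ P → ρ (a * b) = ρ a * ρ b

namespace IsPartialHom

variable {G H : Type*} [Group G] [Group H] {ρ : G → H} {P : Set G}

theorem map_one (hρ : IsPartialHom ρ P) (h1 : 1 ∈ P) : ρ 1 = 1 := by
  have h := hρ 1 h1 1 h1 (by rwa [one_mul])
  rwa [one_mul, left_eq_mul] at h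

theorem map_inv (hρ : IsPartialHom ρ P) (h1 : 1 ∈ P) {a : G} (ha : a ∈ P) (ha' : a⁻¹ ∈ P) :
    ρ a⁻¹ = (ρ a)⁻¹ := by
  have h := hρ a ha a⁻¹ ha' (by rwa [mul_inv_cancel])
  rw [mul_inv_cancel, hρ.map_one h1] at h
  exact eq_inv_of_mul_eq_one_right h.symm

theorem exists_mem_sq_ker_near {X : Set G} (hXinv : X⁻¹ = X) (hX1 : 1 ∈ X) {m : ℕ}
    (hm : 1 ≤ m) (hρ : IsPartialHom ρ (X ^ (m + 1))) {d : G → G → ℝ}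
    (hd : ∀ g x y, d (g * x) (g * y) = d x y) {F : Set G} (hF : F.Finite) :
    ∃ R > 0, ∀ y ∈ X, ∀ f ∈ F, y * f ∈ X ^ m → ρ (y * f) = 1 →
      ∃ z ∈ X ^ 2, ρ z = 1 ∧ d z (y * f) < R := by
  have hXle : ∀ {n}, n ≤ m + 1 → X ^ n ⊆ X ^ (m + 1) := pow_subset_pow_right hX1
  have hXP : X ⊆ X ^ (m + 1) := subset_pow hX1 m.succ_ne_zero
  let c : G → G := fun f => Function.invFunOn ρ X (ρ f)
  obtain ⟨B, hB⟩ := (hF.image fun f => d (c f) f).bddAbove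
  refine ⟨max B 0 + 1, by positivity, fun y hy f hf hyf hker => ?_⟩
  have hy' : y⁻¹ ∈ X := by rw [← hXinv]; exact inv_mem_inv.mpr hy
  have hfP : f ∈ X ^ (m + 1) := by
    rw [← inv_mul_cancel_left y f, pow_succ']
    exact mul_mem_mul hy' hyf
  have hρyf : ρ (y * f) = ρ y * ρ f := hρ y (hXP hy) f hfP (hXle m.le_succ hyf)
  have hρf : ∃ x ∈ X, ρ x = ρ f := by
    refine ⟨y⁻¹, hy', ?_⟩
    rw [hρ.map_inv (one_mem_pow hX1) (hXP hy) (hXP hy'), inv_eq_of_mul_eq_one_right (hρyf ▸ hker)]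
  have hcX : c f ∈ X := Function.invFunOn_mem hρf
  have hz : y * c f ∈ X ^ 2 := by rw [pow_two]; exact mul_mem_mul hy hcX
  refine ⟨y * c f, hz, ?_, ?_⟩
  · rw [hρ y (hXP hy) (c f) (hXP hcX) (hXle (by omega) hz), Function.invFunOn_eq hρf, ← hρyf,
      hker]
  · rw [hd]
    exact (hB ⟨f, hf, rfl⟩).trans_lt ((le_max_left B 0).trans_lt (lt_add_one _))

end IsPartialHom

theorem partial_kernels_coarsely_equivalent_general {G H : Type*} [Group G] [Group H]
    (X : Set G) (hX : IsApproxSubgroup X)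
    (k : ℕ) (hk : 2 ≤ k)
    (ρ : G → H)
    (hhom : ∀ a ∈ X ^ (k + 1), ∀ b ∈ X ^ (k + 1), a * b ∈ X ^ (k + 1) →
      ρ (a * b) = ρ a * ρ b)
    (d : G → G → ℝ)
    (hdinv : ∀ g x y, d (g * x) (g * y) = d x y) :
    ∃ R : ℝ, 0 < R ∧ ∀ j : ℕ, 2 ≤ j → j ≤ k →
      ({g : G | ρ g = 1} ∩ X ^ 2 ⊆ {g : G | ρ g = 1} ∩ X ^ j) ∧
      ∀ x ∈ {g : G | ρ g = 1} ∩ X ^ j, ∃ y ∈ {g : G | ρ g = 1} ∩ X ^ 2, d y x < R := by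
  obtain ⟨F, hF, hcover⟩ := hX.exists_finite_pow_subset_mul (k - 1)
  obtain ⟨R, hR, hnear⟩ :=
    IsPartialHom.exists_mem_sq_ker_near hX.1 hX.2.1 (by omega : 1 ≤ k) hhom hdinv hF
  refine ⟨R, hR, fun j hj2 hjk =>
    ⟨inter_subset_inter_right _ (pow_subset_pow_right hX.2.1 hj2), ?_⟩⟩
  rintro x ⟨hρx, hx⟩
  obtain ⟨n, rfl⟩ : ∃ n, j = n + 1 := ⟨j - 1, by omega⟩
  obtain ⟨y, hy, f, hf, rfl⟩ := hcover n (by omega) hx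
  obtain ⟨z, hz, hρz, hdz⟩ := hnear y hy f hf (pow_subset_pow_right hX.2.1 hjk hx) hρx
  exact ⟨z, ⟨hρz, hz⟩, hdz⟩

/-- For a `(k+1)`-local morphism `ρ` of countable approximate groups with `ρ(Ξ) = Λ` and
`k ≥ 2`, there is `R > 0` such that `ker₂(ρ) ⊆ ker_j(ρ) ⊆ N_R(ker₂(ρ))` for `j = 2, …, k`. -/
theorem partial_kernels_coarsely_equivalent {G H : Type*} [Group G] [Group H]
    [Countable G]
    (X : Set G) (L : Set H) (hX : IsApproxSubgroup X) (hL : IsApproxSubgroup L)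
    (k : ℕ) (hk : 2 ≤ k)
    (ρ : G → H)
    (hhom : ∀ a ∈ X ^ (k + 1), ∀ b ∈ X ^ (k + 1), a * b ∈ X ^ (k + 1) →
      ρ (a * b) = ρ a * ρ b)
    (himg : ρ '' X = L)
    (d : G → G → ℝ)
    (hdeq : ∀ x y, d x y = 0 ↔ x = y) (hdsymm : ∀ x y, d x y = d y x)
    (hdtri : ∀ x y z, d x z ≤ d x y + d y z)
    (hdinv : ∀ g x y, d (g * x) (g * y) = d x y)
    (hdproper : ∀ r : ℝ, {g : G | d 1 g ≤ r}.Finite) :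
    ∃ R : ℝ, 0 < R ∧ ∀ j : ℕ, 2 ≤ j → j ≤ k →
      ({g : G | ρ g = 1} ∩ X ^ 2 ⊆ {g : G | ρ g = 1} ∩ X ^ j) ∧
      ∀ x ∈ {g : G | ρ g = 1} ∩ X ^ j, ∃ y ∈ {g : G | ρ g = 1} ∩ X ^ 2, d y x < R :=
  partial_kernels_coarsely_equivalent_general X hX k hk ρ hhom d hdinv
end

section
/- Let Λ be an approximate subgroup of a countable group Γ with left-invariant proper weighted word metric d associated to weight w, let R > 0, set T_R := {g ∈ Γ : w(g) ≤ R} and Γ_R := ⟨T_R⟩. Suppose F ⊆ Γ is a finite set with Λ⁴ ⊆ FΛ² and F ⊆ T_R. Then Ξ_R := Λ² ∩ Γ_R satisfies Ξ_R² ⊆ F·Ξ_R; in particular Ξ_R is an approximate subgroup of the finitely generated group Γ_R. -/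
open Pointwise

/-! Since `F ⊆ Γ_R`, the factorisation `ab = f y` of a product `ab ∈ Ξ_R² ⊆ Λ⁴` with `f ∈ F` and
`y ∈ Λ²` has `y = f⁻¹ab ∈ Γ_R`, so `y ∈ Ξ_R`. Finite generation of `Γ_R` is properness of `w`. -/

namespace Set

variable {G : Type*} [Group G]

theorem inv_inter_subgroup_of_inv_eq {A : Set G} (hA : A⁻¹ = A) (H : Subgroup G) :
    (A ∩ H)⁻¹ = A ∩ H := by
  rw [inter_inv, hA, inv_coe_set]

theorem inter_subgroup_mul_subset {A B F : Set G} {H : Subgroup G} (hAB : A * A ⊆ F * B)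
    (hFH : F ⊆ H) : (A ∩ H) * (A ∩ H) ⊆ F * (B ∩ H) := by
  rintro _ ⟨a, ⟨haA, haH⟩, b, ⟨hbA, hbH⟩, rfl⟩
  obtain ⟨f, hf, y, hyB, hfy⟩ := hAB (mul_mem_mul haA hbA)
  have hyH : y ∈ H := by
    rw [eq_inv_mul_of_mul_eq hfy]
    exact mul_mem (inv_mem (hFH hf)) (mul_mem haH hbH)
  exact ⟨f, hf, y, ⟨hyB, hyH⟩, hfy⟩

end Set

theorem xi_R_approx_subgroup_general {G : Type*} [Group G]
    (w : G → ℝ) (hwproper : ∀ C : ℝ, {g : G | w g ≤ C}.Finite)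
    (L : Set G) (hsym : L⁻¹ = L) (hone : (1 : G) ∈ L)
    (R : ℝ)
    (F : Set G) (hF4 : L ^ 4 ⊆ F * L ^ 2)
    (hFT : F ⊆ {g : G | w g ≤ R}) :
    let ΓR := Subgroup.closure {g : G | w g ≤ R}
    let ΞR := L ^ 2 ∩ (ΓR : Set G)
    ΞR⁻¹ = ΞR ∧ (1 : G) ∈ ΞR ∧ ΞR * ΞR ⊆ F * ΞR ∧ ΓR.FG := by
  intro ΓR ΞR
  refine ⟨Set.inv_inter_subgroup_of_inv_eq (by rw [← inv_pow, hsym]) ΓR,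
    ⟨Set.one_mem_pow hone, ΓR.one_mem⟩, ?_, (Subgroup.fg_iff _).2 ⟨_, rfl, hwproper R⟩⟩
  refine Set.inter_subgroup_mul_subset ?_ (hFT.trans Subgroup.subset_closure)
  rwa [← pow_add]

/-- Let `L` be an approximate subgroup of a countable group `G` with proper weight `w`, let
`T_R = {g : w g ≤ R}`, `Γ_R = ⟨T_R⟩`, and suppose `F` is finite with `L⁴ ⊆ F·L²` and
`F ⊆ T_R`. Then `Ξ_R = L² ∩ Γ_R` satisfies `Ξ_R² ⊆ F·Ξ_R`; in particular `Ξ_R` is an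
approximate subgroup of the finitely generated group `Γ_R`. -/
theorem xi_R_approx_subgroup {G : Type*} [Group G] [Countable G]
    (w : G → ℝ) (hwproper : ∀ C : ℝ, {g : G | w g ≤ C}.Finite)
    (L : Set G) (hsym : L⁻¹ = L) (hone : (1 : G) ∈ L)
    (R : ℝ) (hR : 0 < R)
    (F : Set G) (hFfin : F.Finite) (hF4 : L ^ 4 ⊆ F * L ^ 2)
    (hFT : F ⊆ {g : G | w g ≤ R}) :
    let ΓR := Subgroup.closure {g : G | w g ≤ R}
    let ΞR := L ^ 2 ∩ (ΓR : Set G)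
    ΞR⁻¹ = ΞR ∧ (1 : G) ∈ ΞR ∧ ΞR * ΞR ⊆ F * ΞR ∧ ΓR.FG :=
  xi_R_approx_subgroup_general w hwproper L hsym hone R F hF4 hFT
end
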